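/- arXiv:2110.12170 — 6 statements merged into one kernel-verified Lean document; each statement's English description precedes it below -/
import Mathlib

section
/- Let C be a clutter with vertex set U ∪ V (disjoint), and {C_u}_{u∈U} a family of non-empty clutters pairwise disjoint from each other and from C. Let C' = C ∪ ⋃_{u∈U} {e ∪ {u} : e ∈ C_u}. Then dim Δ_{C'} = Σ_{u∈U} |V(C_u)| + dim Δ_{C[V]}, where Δ denotes the independence complex and C[V] is the induced subclutter on V. -/
variable {α : Type*} [DecidableEq α]

/-- `F` is an independent set: a subset of the vertex set `V` containing no circuit of `C`. -/
def IndepOn (V : Finset α) (C : Finset (Finset α)) (F : Finset α) : Prop :=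
  F ⊆ V ∧ ∀ e ∈ C, ¬ e ⊆ F

/-- `F` is a facet of the independence complex: a maximal independent set. -/
def FacetOn (V : Finset α) (C : Finset (Finset α)) (F : Finset α) : Prop :=
  IndepOn V C F ∧ ∀ G, IndepOn V C G → F ⊆ G → F = G

/-- The independence number: the maximum cardinality of an independent set. -/
def indepNum (V : Finset α) (C : Finset (Finset α)) : ℕ :=
  (V.powerset.filter (fun F => ∀ e ∈ C, ¬ e ⊆ F)).sup Finset.card

/-- `C` is a clutter on vertex set `V`: circuits are subsets of `V` forming an antichain
whose union is `V`. -/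
def IsClutterOn (V : Finset α) (C : Finset (Finset α)) : Prop :=
  (∀ e ∈ C, e ⊆ V) ∧ (∀ e ∈ C, ∀ f ∈ C, e ⊆ f → e = f) ∧ (∀ v ∈ V, ∃ e ∈ C, v ∈ e)

open Finset in
/-- Second construction, dimension formula: for `C' = C ∪ ⋃_{u∈U} {e ∪ {u} : e ∈ C_u}`,
`dim Δ_{C'} = Σ_{u∈U} |V(C_u)| + dim Δ_{C[V]}` (with `dim Δ = indepNum − 1`). -/
theorem dim_second_construction (U V : Finset α) (hUV : Disjoint U V)
    (C : Finset (Finset α)) (hC : IsClutterOn (U ∪ V) C)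
    (Vu : α → Finset α) (Cu : α → Finset (Finset α))
    (hCu : ∀ u ∈ U, IsClutterOn (Vu u) (Cu u))
    (hCuNe : ∀ u ∈ U, (Cu u).Nonempty)
    (hCuE : ∀ u ∈ U, ∀ e ∈ Cu u, e.Nonempty)
    (hdisj : ∀ u ∈ U, Disjoint (Vu u) (U ∪ V))
    (hpair : ∀ u ∈ U, ∀ u' ∈ U, u ≠ u' → Disjoint (Vu u) (Vu u')) :
    ((indepNum ((U ∪ V) ∪ U.biUnion Vu)
        (C ∪ U.biUnion (fun u => (Cu u).image (insert u))) : ℤ) - 1) =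
      (∑ u ∈ U, ((Vu u).card : ℤ)) +
        ((indepNum V (C.filter (fun e => e ⊆ V)) : ℤ) - 1) := by
  classical
  set W := (U ∪ V) ∪ U.biUnion Vu with hW
  set C' := C ∪ U.biUnion (fun u => (Cu u).image (insert u)) with hC'
  set CV := C.filter (fun e => e ⊆ V) with hCV
  have key : indepNum W C' = (∑ u ∈ U, (Vu u).card) + indepNum V CV := by
    apply le_antisymm
    · -- upper bound
      apply Finset.sup_le
      intro F hF
      simp only [Finset.mem_filter, Finset.mem_powerset] at hF
      obtain ⟨hFW, hFind⟩ := hF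
      have hVb : (F ∩ V).card ≤ indepNum V CV := by
        apply Finset.le_sup (f := Finset.card)
        simp only [Finset.mem_filter, Finset.mem_powerset]
        refine ⟨Finset.inter_subset_right, ?_⟩
        intro e he hsub
        rw [hCV, Finset.mem_filter] at he
        exact hFind e (Finset.mem_union_left _ he.1)
          (hsub.trans Finset.inter_subset_left)
      have hUBb : (F ∩ U).card + (F ∩ U.biUnion Vu).card ≤ ∑ u ∈ U, (Vu u).card := by
        have h1 : (F ∩ U).card = ∑ u ∈ U, if u ∈ F then 1 else 0 := by
          rw [Finset.inter_comm, ← Finset.filter_mem_eq_inter, Finset.card_filter]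
        have h2 : (F ∩ U.biUnion Vu).card ≤ ∑ u ∈ U, (F ∩ Vu u).card := by
          have : F ∩ U.biUnion Vu = U.biUnion (fun u => F ∩ Vu u) := by
            ext x; simp [Finset.mem_biUnion]; tauto
          rw [this]
          exact Finset.card_biUnion_le
        have h3 : ∀ u ∈ U, (if u ∈ F then 1 else 0) + (F ∩ Vu u).card ≤ (Vu u).card := by
          intro u hu
          by_cases huF : u ∈ F
          · simp only [huF, if_true]
            have hss : F ∩ Vu u ⊂ Vu u := by
              refine Finset.ssubset_iff_subset_ne.mpr ⟨Finset.inter_subset_right, ?_⟩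
              intro heq
              obtain ⟨e, he⟩ := hCuNe u hu
              have heV : e ⊆ Vu u := (hCu u hu).1 e he
              have hVuF : Vu u ⊆ F := Finset.inter_eq_right.mp heq
              have heF : insert u e ⊆ F := Finset.insert_subset huF (heV.trans hVuF)
              refine hFind (insert u e) ?_ heF
              refine Finset.mem_union_right _ ?_
              exact Finset.mem_biUnion.mpr ⟨u, hu, Finset.mem_image_of_mem _ he⟩
            have := Finset.card_lt_card hss
            omega
          · simp only [huF, if_false, zero_add]
            exact Finset.card_le_card Finset.inter_subset_right
        calc (F ∩ U).card + (F ∩ U.biUnion Vu).card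
            ≤ ∑ u ∈ U, ((if u ∈ F then 1 else 0) + (F ∩ Vu u).card) := by
              rw [Finset.sum_add_distrib, ← h1]; omega
          _ ≤ ∑ u ∈ U, (Vu u).card := Finset.sum_le_sum h3
      have hsplit : F.card ≤ (F ∩ U).card + (F ∩ V).card + (F ∩ U.biUnion Vu).card := by
        have hsub : F ⊆ ((F ∩ U) ∪ (F ∩ V)) ∪ (F ∩ U.biUnion Vu) := by
          intro x hx
          have := hFW hx
          simp only [hW, Finset.mem_union] at this ⊢
          simp only [Finset.mem_inter]
          tauto
        calc F.card ≤ (((F ∩ U) ∪ (F ∩ V)) ∪ (F ∩ U.biUnion Vu)).card :=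
              Finset.card_le_card hsub
          _ ≤ ((F ∩ U) ∪ (F ∩ V)).card + (F ∩ U.biUnion Vu).card := Finset.card_union_le _ _
          _ ≤ (F ∩ U).card + (F ∩ V).card + (F ∩ U.biUnion Vu).card := by
              have := Finset.card_union_le (F ∩ U) (F ∩ V); omega
      omega
    · -- lower bound
      by_cases hemp : (∅ : Finset α) ∈ C
      · -- degenerate case: U ∪ V = ∅
        have hUVempty : U ∪ V = (∅ : Finset α) := by
          by_contra h
          obtain ⟨v, hv⟩ := Finset.nonempty_iff_ne_empty.mpr h
          obtain ⟨e, he, hve⟩ := hC.2.2 v hv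
          have := hC.2.1 ∅ hemp e he (Finset.empty_subset e)
          exact absurd hve (by rw [← this]; simp)
        have hUe : U = ∅ := Finset.union_eq_empty.mp hUVempty |>.1
        have hVe : V = ∅ := Finset.union_eq_empty.mp hUVempty |>.2
        have hzero : indepNum V CV = 0 := by
          subst hVe
          have : (∅ : Finset α).powerset.filter (fun F => ∀ e ∈ CV, ¬ e ⊆ F) = ∅ := by
            rw [Finset.filter_eq_empty_iff]
            intro F hF
            simp only [Finset.powerset_empty, Finset.mem_singleton] at hF
            subst hF
            push_neg
            exact ⟨∅, by rw [hCV]; exact Finset.mem_filter.mpr ⟨hemp, by simp⟩, by simp⟩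
          rw [indepNum, this, Finset.sup_empty]
          rfl
        rw [hzero, hUe]
        simp
      · -- nondegenerate
        have hne : (V.powerset.filter (fun F => ∀ e ∈ CV, ¬ e ⊆ F)).Nonempty := by
          refine ⟨∅, Finset.mem_filter.mpr ⟨by simp, ?_⟩⟩
          intro e he hsub
          rw [hCV, Finset.mem_filter] at he
          have : e = ∅ := Finset.subset_empty.mp hsub
          subst this
          exact hemp he.1
        obtain ⟨G, hG, hGcard⟩ := Finset.exists_mem_eq_sup _ hne Finset.card
        simp only [Finset.mem_filter, Finset.mem_powerset] at hG
        obtain ⟨hGV, hGind⟩ := hG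
        set F := G ∪ U.biUnion Vu with hF
        have hdisjGB : Disjoint G (U.biUnion Vu) := by
          rw [Finset.disjoint_left]
          intro x hxG hxB
          obtain ⟨u, hu, hxVu⟩ := Finset.mem_biUnion.mp hxB
          exact (Finset.disjoint_left.mp (hdisj u hu)) hxVu
            (Finset.mem_union_right _ (hGV hxG))
        have hFcard : F.card = G.card + ∑ u ∈ U, (Vu u).card := by
          rw [hF, Finset.card_union_of_disjoint hdisjGB, Finset.card_biUnion]
          intro x hx y hy hxy
          exact hpair x hx y hy hxy
        have hFmem : F ∈ W.powerset.filter (fun F => ∀ e ∈ C', ¬ e ⊆ F) := by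
          refine Finset.mem_filter.mpr ⟨Finset.mem_powerset.mpr ?_, ?_⟩
          · intro x hx
            rcases Finset.mem_union.mp hx with hxG | hxB
            · exact Finset.mem_union_left _ (Finset.mem_union_right _ (hGV hxG))
            · exact Finset.mem_union_right _ hxB
          · intro e he hsub
            rcases Finset.mem_union.mp he with heC | heB
            · -- e ∈ C, so e ⊆ U ∪ V; show e ⊆ G
              have heG : e ⊆ G := by
                intro x hx
                have hxUV := hC.1 e heC hx
                rcases Finset.mem_union.mp (hsub hx) with hxG | hxB
                · exact hxG
                · obtain ⟨u, hu, hxVu⟩ := Finset.mem_biUnion.mp hxB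
                  exact absurd hxUV
                    (fun h => (Finset.disjoint_left.mp (hdisj u hu)) hxVu h)
              have heCV : e ∈ CV := by
                rw [hCV]
                exact Finset.mem_filter.mpr ⟨heC, heG.trans hGV⟩
              exact hGind e heCV heG
            · obtain ⟨u, hu, hmem⟩ := Finset.mem_biUnion.mp heB
              obtain ⟨e', he', rfl⟩ := Finset.mem_image.mp hmem
              have huF : u ∈ F := hsub (Finset.mem_insert_self u e')
              rcases Finset.mem_union.mp huF with huG | huB
              · exact (Finset.disjoint_left.mp hUV) hu (hGV huG)
              · obtain ⟨u', hu', huVu⟩ := Finset.mem_biUnion.mp huB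
                exact (Finset.disjoint_left.mp (hdisj u' hu')) huVu
                  (Finset.mem_union_left _ hu)
        have : F.card ≤ indepNum W C' := Finset.le_sup (f := Finset.card) hFmem
        rw [hFcard] at this
        have hIN : indepNum V CV = G.card := hGcard
        omega
  rw [key]
  push_cast
  ring
end

section
/- Let C be a clutter with vertex set U ∪ V (disjoint), and {C_u}_{u∈U} non-empty clutters pairwise disjoint from each other and from C. Form C' = C ∪ ⋃_{u∈U} {e ∪ {u} : e ∈ C_u}. Then the facets of Δ_{C'} are exactly the sets F ∪ ⋃_{u∈U} G_u, where F ranges over V-maximal faces of Δ_C, G_u = V(C_u) whenever u ∉ F, and G_u ranges over facets of Δ_{C_u} whenever u ∈ F. -/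
variable {α : Type*} [DecidableEq α]

open Finset in
lemma indepC'_iff {U : Finset α} (C : Finset (Finset α)) (Cu : α → Finset (Finset α))
    (T : Finset α) :
    (∀ e ∈ C ∪ U.biUnion (fun u => (Cu u).image (insert u)), ¬ e ⊆ T) ↔
    ((∀ e ∈ C, ¬ e ⊆ T) ∧ ∀ u ∈ U, ∀ e ∈ Cu u, ¬ insert u e ⊆ T) := by
  constructor
  · intro h
    exact ⟨fun e he => h e (mem_union_left _ he),
      fun u hu e he => h _ (mem_union_right _
        (mem_biUnion.mpr ⟨u, hu, mem_image_of_mem _ he⟩))⟩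
  · rintro ⟨h1, h2⟩ e he
    rcases mem_union.mp he with he | he
    · exact h1 e he
    · obtain ⟨u, hu, he'⟩ := mem_biUnion.mp he
      obtain ⟨e', he2, rfl⟩ := mem_image.mp he'
      exact h2 u hu e' he2

open Finset in
/-- Second construction, facet description: the facets of `Δ_{C'}` are exactly the sets
`F ∪ ⋃_{u∈U} G_u` where `F` is a `V`-maximal face of `Δ_C`, `G_u = V(C_u)` if `u ∉ F`,
and `G_u` is a facet of `Δ_{C_u}` if `u ∈ F`. -/
theorem facets_second_construction (U V : Finset α) (hUV : Disjoint U V)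
    (C : Finset (Finset α)) (hC : IsClutterOn (U ∪ V) C)
    (Vu : α → Finset α) (Cu : α → Finset (Finset α))
    (hCu : ∀ u ∈ U, IsClutterOn (Vu u) (Cu u))
    (hCuNe : ∀ u ∈ U, (Cu u).Nonempty)
    (hCuE : ∀ u ∈ U, ∀ e ∈ Cu u, e.Nonempty)
    (hdisj : ∀ u ∈ U, Disjoint (Vu u) (U ∪ V))
    (hpair : ∀ u ∈ U, ∀ u' ∈ U, u ≠ u' → Disjoint (Vu u) (Vu u')) :
    ∀ S : Finset α,
      FacetOn ((U ∪ V) ∪ U.biUnion Vu)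
          (C ∪ U.biUnion (fun u => (Cu u).image (insert u))) S ↔
      ∃ (F : Finset α) (g : α → Finset α),
        IndepOn (U ∪ V) C F ∧
        (∀ w ∈ V, w ∉ F → ¬ IndepOn (U ∪ V) C (insert w F)) ∧
        (∀ u ∈ U, u ∈ F → FacetOn (Vu u) (Cu u) (g u)) ∧
        (∀ u ∈ U, u ∉ F → g u = Vu u) ∧
        S = F ∪ U.biUnion g := by
  intro S
  have hVuUV : ∀ u ∈ U, ∀ x ∈ Vu u, x ∉ U ∪ V := fun u hu x hx =>
    disjoint_left.mp (hdisj u hu) hx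
  constructor
  · rintro ⟨⟨hSW, hSind⟩, hSmax⟩
    obtain ⟨hSC, hSCu⟩ := (indepC'_iff C Cu S).mp hSind
    -- key: if inserting w keeps independence, then w ∈ S
    have hins : ∀ w, w ∈ (U ∪ V) ∪ U.biUnion Vu →
        ((∀ e ∈ C, ¬ e ⊆ insert w S) ∧
          ∀ u ∈ U, ∀ e ∈ Cu u, ¬ insert u e ⊆ insert w S) → w ∈ S := by
      intro w hw hind
      have h := hSmax (insert w S)
        ⟨insert_subset hw hSW, (indepC'_iff C Cu _).mpr hind⟩ (subset_insert _ _)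
      rw [h]; exact mem_insert_self _ _
    refine ⟨S ∩ (U ∪ V), fun u => S ∩ Vu u, ⟨inter_subset_right, ?_⟩, ?_, ?_, ?_, ?_⟩
    · exact fun e he hsub => hSC e he (hsub.trans inter_subset_left)
    · -- V-maximality
      rintro w hwV hwF ⟨_, hFind⟩
      apply hwF
      have hwUV : w ∈ U ∪ V := mem_union_right _ hwV
      have hwS : w ∈ S := by
        apply hins w (mem_union_left _ hwUV)
        constructor
        · intro e he hsub
          apply hFind e he
          intro x hx
          rcases mem_insert.mp (hsub hx) with rfl | hxS
          · exact mem_insert_self _ _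
          · exact mem_insert_of_mem (mem_inter_of_mem hxS (hC.1 e he hx))
        · intro u hu e he hsub
          have huw : u ≠ w := fun h => disjoint_left.mp hUV (h ▸ hu) hwV
          have huS : u ∈ S := by
            rcases mem_insert.mp (hsub (mem_insert_self _ _)) with h | h
            · exact absurd h huw
            · exact h
          have heS : e ⊆ S := by
            intro x hx
            rcases mem_insert.mp (hsub (mem_insert_of_mem hx)) with rfl | h
            · exact absurd hwUV (hVuUV u hu x ((hCu u hu).1 e he hx))
            · exact h
          exact hSCu u hu e he (insert_subset huS heS)
      exact mem_inter_of_mem hwS hwUV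
    · -- facets of Cu u for u ∈ S
      intro u hu huF
      have huS : u ∈ S := (mem_inter.mp huF).1
      refine ⟨⟨inter_subset_right, fun e he hsub =>
        hSCu u hu e he (insert_subset huS (hsub.trans inter_subset_left))⟩, ?_⟩
      intro G ⟨hGV, hGind⟩ hsub
      refine Subset.antisymm hsub (fun w hwG => ?_)
      have hwVu : w ∈ Vu u := hGV hwG
      have hwS : w ∈ S := by
        apply hins w (mem_union_right _ (mem_biUnion.mpr ⟨u, hu, hwVu⟩))
        constructor
        · intro e he hsub'
          apply hSC e he
          intro x hx
          rcases mem_insert.mp (hsub' hx) with rfl | h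
          · exact absurd (hC.1 e he hx) (hVuUV u hu x hwVu)
          · exact h
        · intro u' hu' e he hsub'
          have hu'w : u' ≠ w := fun h =>
            hVuUV u hu w hwVu (mem_union_left _ (h ▸ hu'))
          have hu'S : u' ∈ S := by
            rcases mem_insert.mp (hsub' (mem_insert_self _ _)) with h | h
            · exact absurd h hu'w
            · exact h
          by_cases hwe : w ∈ e
          · have huu : u' = u := by
              by_contra hne
              exact disjoint_left.mp (hpair u' hu' u hu hne)
                ((hCu u' hu').1 e he hwe) hwVu
            apply hGind e (huu ▸ he)
            intro x hx
            rcases mem_insert.mp (hsub' (mem_insert_of_mem hx)) with rfl | h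
            · exact hwG
            · exact hsub (mem_inter_of_mem h ((hCu u hu).1 e (huu ▸ he) hx))
          · have heS : e ⊆ S := by
              intro x hx
              rcases mem_insert.mp (hsub' (mem_insert_of_mem hx)) with rfl | h
              · exact absurd hx hwe
              · exact h
            exact hSCu u' hu' e he (insert_subset hu'S heS)
      exact mem_inter_of_mem hwS hwVu
    · -- u ∉ F : g u = Vu u
      intro u hu huF
      have huS : u ∉ S := fun h => huF (mem_inter_of_mem h (mem_union_left _ hu))
      apply inter_eq_right.mpr
      intro w hwVu
      apply hins w (mem_union_right _ (mem_biUnion.mpr ⟨u, hu, hwVu⟩))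
      constructor
      · intro e he hsub'
        apply hSC e he
        intro x hx
        rcases mem_insert.mp (hsub' hx) with rfl | h
        · exact absurd (hC.1 e he hx) (hVuUV u hu x hwVu)
        · exact h
      · intro u' hu' e he hsub'
        have hu'w : u' ≠ w := fun h =>
          hVuUV u hu w hwVu (mem_union_left _ (h ▸ hu'))
        have hu'S : u' ∈ S := by
          rcases mem_insert.mp (hsub' (mem_insert_self _ _)) with h | h
          · exact absurd h hu'w
          · exact h
        by_cases hwe : w ∈ e
        · have : u' = u := by
            by_contra hne
            exact disjoint_left.mp (hpair u' hu' u hu hne)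
              ((hCu u' hu').1 e he hwe) hwVu
          exact huS (this ▸ hu'S)
        · have heS : e ⊆ S := by
            intro x hx
            rcases mem_insert.mp (hsub' (mem_insert_of_mem hx)) with rfl | h
            · exact absurd hx hwe
            · exact h
          exact hSCu u' hu' e he (insert_subset hu'S heS)
    · -- decomposition
      ext x
      constructor
      · intro hx
        rcases mem_union.mp (hSW hx) with h | h
        · exact mem_union_left _ (mem_inter_of_mem hx h)
        · obtain ⟨u, hu, hxu⟩ := mem_biUnion.mp h
          exact mem_union_right _ (mem_biUnion.mpr ⟨u, hu, mem_inter_of_mem hx hxu⟩)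
      · intro hx
        rcases mem_union.mp hx with h | h
        · exact (mem_inter.mp h).1
        · obtain ⟨u, hu, hxu⟩ := mem_biUnion.mp h
          exact (mem_inter.mp hxu).1
  · rintro ⟨F, g, ⟨hFW, hFC⟩, hVmax, hgF, hgV, rfl⟩
    have hgVu : ∀ u ∈ U, g u ⊆ Vu u := by
      intro u hu
      by_cases huF : u ∈ F
      · exact (hgF u hu huF).1.1
      · exact (hgV u hu huF) ▸ Subset.rfl
    have hmemUV : ∀ x ∈ U ∪ V, x ∈ F ∪ U.biUnion g → x ∈ F := by
      intro x hxUV hx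
      rcases mem_union.mp hx with h | h
      · exact h
      · obtain ⟨u, hu, hxu⟩ := mem_biUnion.mp h
        exact absurd hxUV (hVuUV u hu x (hgVu u hu hxu))
    have hmemVu : ∀ u ∈ U, ∀ x ∈ Vu u, x ∈ F ∪ U.biUnion g → x ∈ g u := by
      intro u hu x hxVu hx
      rcases mem_union.mp hx with h | h
      · exact absurd (hFW h) (hVuUV u hu x hxVu)
      · obtain ⟨u', hu', hxu⟩ := mem_biUnion.mp h
        rcases eq_or_ne u' u with rfl | hne
        · exact hxu
        · exact absurd hxVu (disjoint_left.mp (hpair u' hu' u hu hne) (hgVu u' hu' hxu))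
    have hSW : F ∪ U.biUnion g ⊆ (U ∪ V) ∪ U.biUnion Vu := by
      apply union_subset (hFW.trans subset_union_left)
      intro x hx
      obtain ⟨u, hu, hxu⟩ := mem_biUnion.mp hx
      exact mem_union_right _ (mem_biUnion.mpr ⟨u, hu, hgVu u hu hxu⟩)
    refine ⟨⟨hSW, (indepC'_iff C Cu _).mpr ⟨?_, ?_⟩⟩, ?_⟩
    · intro e he hsub
      exact hFC e he (fun x hx => hmemUV x (hC.1 e he hx) (hsub hx))
    · intro u hu e he hsub
      have huF : u ∈ F := hmemUV u (mem_union_left _ hu)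
        (hsub (mem_insert_self _ _))
      apply (hgF u hu huF).1.2 e he
      intro x hx
      exact hmemVu u hu x ((hCu u hu).1 e he hx) (hsub (mem_insert_of_mem hx))
    · intro G ⟨hGW, hGind⟩ hsub
      obtain ⟨hG1, hG2⟩ := (indepC'_iff C Cu G).mp hGind
      refine Subset.antisymm hsub (fun w hwG => ?_)
      by_contra hwS
      rcases mem_union.mp (hGW hwG) with hwUV | hwBi
      · rcases mem_union.mp hwUV with hwU | hwV
        · have hwF : w ∉ F := fun h => hwS (mem_union_left _ h)
          have hgw : g w = Vu w := hgV w hwU hwF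
          obtain ⟨e, he⟩ := hCuNe w hwU
          apply hG2 w hwU e he
          apply insert_subset hwG
          intro x hx
          exact hsub (mem_union_right _ (mem_biUnion.mpr
            ⟨w, hwU, hgw ▸ (hCu w hwU).1 e he hx⟩))
        · have hwF : w ∉ F := fun h => hwS (mem_union_left _ h)
          apply hVmax w hwV hwF
          refine ⟨insert_subset (mem_union_right _ hwV) hFW, ?_⟩
          intro e he hsub'
          apply hG1 e he
          intro x hx
          rcases mem_insert.mp (hsub' hx) with rfl | h
          · exact hwG
          · exact hsub (mem_union_left _ h)
      · obtain ⟨u, hu, hwVu⟩ := mem_biUnion.mp hwBi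
        have hwgu : w ∉ g u := fun h =>
          hwS (mem_union_right _ (mem_biUnion.mpr ⟨u, hu, h⟩))
        by_cases huF : u ∈ F
        · have hfac := hgF u hu huF
          have : g u = insert w (g u) := by
            apply hfac.2
            · refine ⟨insert_subset hwVu (hgVu u hu), ?_⟩
              intro e he hsub'
              apply hG2 u hu e he
              apply insert_subset (hsub (mem_union_left _ huF))
              intro x hx
              rcases mem_insert.mp (hsub' hx) with rfl | h
              · exact hwG
              · exact hsub (mem_union_right _ (mem_biUnion.mpr ⟨u, hu, h⟩))
            · exact subset_insert _ _
          exact hwgu (this ▸ mem_insert_self w (g u))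
        · exact hwgu ((hgV u hu huF) ▸ hwVu)
end

section
/- Let C_u be a non-empty clutter and let C_u* be the set of minimal elements (under inclusion) of {e \ {x} : x ∈ e, e ∈ C_u}. Then Δ_{C_u*} ⊆ Δ_{C_u} and no facet of Δ_{C_u*} is a facet of Δ_{C_u}; consequently dim Δ_{C_u*} ≤ dim Δ_{C_u} − 1. -/
variable {α : Type*} [DecidableEq α]

open Finset in
/-- For a non-empty clutter `C` (with non-empty circuits) and `C*` the set of inclusion-minimal
elements of `{e \ {x} : x ∈ e, e ∈ C}`: every face of `Δ_{C*}` is a face of `Δ_C`, no facet of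
`Δ_{C*}` is a facet of `Δ_C`, and consequently `dim Δ_{C*} ≤ dim Δ_C − 1`, i.e. every face of
`Δ_{C*}` is strictly smaller than some face of `Δ_C`. -/
theorem cstar_facts (V : Finset α) (C : Finset (Finset α))
    (hC : IsClutterOn V C) (hne : C.Nonempty) (hee : ∀ e ∈ C, e.Nonempty)
    (S Cstar : Finset (Finset α))
    (hS : S = C.biUnion (fun e => e.image (fun x => e.erase x)))
    (hstar : Cstar = S.filter (fun f => ∀ g ∈ S, ¬ g ⊂ f)) :
    (∀ F, IndepOn V Cstar F → IndepOn V C F) ∧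
    (∀ F, FacetOn V Cstar F → ¬ FacetOn V C F) ∧
    (∀ F, IndepOn V Cstar F → ∃ G, IndepOn V C G ∧ F.card < G.card) := by
  -- membership in S
  have hSmem : ∀ e ∈ C, ∀ x ∈ e, e.erase x ∈ S := by
    intro e he x hx
    subst hS
    exact mem_biUnion.2 ⟨e, he, mem_image.2 ⟨x, hx, rfl⟩⟩
  -- minimal elements exist
  have hmin : ∀ n (s : Finset α), s.card ≤ n → s ∈ S → ∃ f ∈ Cstar, f ⊆ s := by
    intro n
    induction n with
    | zero =>
      intro s hs hsS
      refine ⟨s, ?_, Subset.rfl⟩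
      rw [hstar, mem_filter]
      refine ⟨hsS, fun g hg hgs => ?_⟩
      have : s = ∅ := card_eq_zero.mp (Nat.le_zero.mp hs)
      subst this
      exact absurd hgs.subset (by simp [hgs.ne])
    | succ n ih =>
      intro s hs hsS
      by_cases h : ∀ g ∈ S, ¬ g ⊂ s
      · exact ⟨s, by rw [hstar, mem_filter]; exact ⟨hsS, h⟩, Subset.rfl⟩
      · push_neg at h
        obtain ⟨g, hgS, hgs⟩ := h
        have hcard : g.card ≤ n := by
          have := Finset.card_lt_card hgs
          omega
        obtain ⟨f, hf, hfg⟩ := ih g hcard hgS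
        exact ⟨f, hf, hfg.trans hgs.subset⟩
  have hmin' : ∀ s ∈ S, ∃ f ∈ Cstar, f ⊆ s := fun s hs => hmin s.card s le_rfl hs
  -- part 1
  have part1 : ∀ F, IndepOn V Cstar F → IndepOn V C F := by
    rintro F ⟨hFV, hF⟩
    refine ⟨hFV, fun e he hsub => ?_⟩
    obtain ⟨x, hx⟩ := hee e he
    obtain ⟨f, hf, hfsub⟩ := hmin' _ (hSmem e he x hx)
    exact hF f hf (hfsub.trans ((erase_subset x e).trans hsub))
  -- key lemma: indep in Cstar and facet in C is impossible
  have keyB : ∀ F, IndepOn V Cstar F → ¬ FacetOn V C F := by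
    rintro F ⟨hFV, hFstar⟩ ⟨⟨_, hFC⟩, hmax⟩
    -- find v ∈ V \ F
    obtain ⟨e0, he0⟩ := hne
    have : ¬ e0 ⊆ F := hFC e0 he0
    obtain ⟨v, hve, hvF⟩ := not_subset.mp this
    have hvV : v ∈ V := hC.1 e0 he0 hve
    -- insert v F is not independent in C
    have hnotind : ¬ IndepOn V C (insert v F) := by
      intro hind
      have := hmax _ hind (subset_insert v F)
      exact hvF (this ▸ mem_insert_self v F)
    have hsubV : insert v F ⊆ V := insert_subset hvV hFV
    have : ∃ e ∈ C, e ⊆ insert v F := by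
      by_contra h
      push_neg at h
      exact hnotind ⟨hsubV, h⟩
    obtain ⟨e, he, hesub⟩ := this
    have hvemem : v ∈ e := by
      by_contra hv
      exact hFC e he fun a ha => (mem_insert.mp (hesub ha)).resolve_left
        (fun h => hv (h ▸ ha))
    have herase : e.erase v ⊆ F := fun a ha =>
      (mem_insert.mp (hesub (mem_of_mem_erase ha))).resolve_left
        (fun h => (ne_of_mem_erase ha) h)
    obtain ⟨f, hf, hfsub⟩ := hmin' _ (hSmem e he v hvemem)
    exact hFstar f hf (hfsub.trans herase)
  refine ⟨part1, fun F hF => keyB F hF.1, ?_⟩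
  -- part 3
  intro F hFstar
  have hFC := part1 F hFstar
  set T := V.powerset.filter (fun G => (∀ e ∈ C, ¬ e ⊆ G) ∧ F ⊆ G) with hT
  have hFT : F ∈ T := by
    rw [hT, mem_filter, mem_powerset]
    exact ⟨hFC.1, hFC.2, Subset.rfl⟩
  obtain ⟨G, hGT, hGmax⟩ := T.exists_max_image Finset.card ⟨F, hFT⟩
  rw [hT, mem_filter, mem_powerset] at hGT
  obtain ⟨hGV, hGind, hFG⟩ := hGT
  have hGfacet : FacetOn V C G := by
    refine ⟨⟨hGV, hGind⟩, fun G' hG' hGG' => ?_⟩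
    have hG'T : G' ∈ T := by
      rw [hT, mem_filter, mem_powerset]
      exact ⟨hG'.1, hG'.2, hFG.trans hGG'⟩
    exact eq_of_subset_of_card_le hGG' (hGmax G' hG'T)
  refine ⟨G, ⟨hGV, hGind⟩, ?_⟩
  by_contra h
  push_neg at h
  have : F = G := eq_of_subset_of_card_le hFG h
  exact keyB F hFstar (this ▸ hGfacet)
end

section
/- Let C be a clutter with vertex set U ∪ V (disjoint), and {C_u}_{u∈U} non-empty clutters pairwise disjoint from each other and from C. Let C'' = C ∪ ⋃_{u∈U} C_u ∪ ⋃_{u∈U} {{u} ∪ e : e ∈ C_u*}, where C_u* is the set of inclusion-minimal elements of {e \ {x} : x ∈ e ∈ C_u}. Then dim Δ_{C''} = |U| + Σ_{u∈U} dim Δ_{C_u} + dim Δ_{C[V]}. -/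
variable {α : Type*} [DecidableEq α]

/-!
Write `i(C)` for the independence number, so that `dim Δ_C = i(C) - 1`. An independent set `G`
of `C''` is covered by its trace on `V`, independent in `C[V]`, and its traces on the blocks
`{u} ∪ V_u`. If `u ∈ G`, then `G ∩ V_u` contains no member of `C_u*`, hence no `e \ {x}` with
`x ∈ e ∈ C_u`; so any vertex of `V_u` outside `G` (one exists, on a circuit of `C_u`) can be
added to `G ∩ V_u` keeping it independent in `C_u`. Either way a block contributes at most
`i(C_u)`. Conversely the union of maximum independent sets of `C[V]` and of the `C_u` is
independent in `C''`. Hence `i(C'') = Σ_u i(C_u) + i(C[V])`.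
-/

open Finset

def deletions (C : Finset (Finset α)) : Finset (Finset α) :=
  C.biUnion fun e => e.image fun x => e.erase x

/-- The paper's `C*`. -/
def minDeletions (C : Finset (Finset α)) : Finset (Finset α) :=
  (deletions C).filter fun f => ∀ g ∈ deletions C, ¬ g ⊂ f

lemma exists_mem_minDeletions_subset {C : Finset (Finset α)} {f : Finset α}
    (hf : f ∈ deletions C) : ∃ g ∈ minDeletions C, g ⊆ f := by
  obtain ⟨g, hgf, hg⟩ := exists_minimal_le_of_wellFoundedLT (· ∈ deletions C) f hf
  exact ⟨g, mem_filter.2 ⟨hg.prop, fun h hh hlt => hg.not_lt hh hlt⟩, hgf⟩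

section indepNum

variable {V : Finset α} {C : Finset (Finset α)} {F : Finset α}

lemma IndepOn.card_le_indepNum (hF : IndepOn V C F) : F.card ≤ indepNum V C :=
  le_sup (f := card) (mem_filter.2 ⟨mem_powerset.2 hF.1, hF.2⟩)

lemma indepNum_le {n : ℕ} (h : ∀ F, IndepOn V C F → F.card ≤ n) : indepNum V C ≤ n :=
  Finset.sup_le fun F hF => by
    rw [mem_filter, mem_powerset] at hF
    exact h F hF

lemma indepNum_eq_zero_of_empty_mem (V : Finset α) (h0 : ∅ ∈ C) : indepNum V C = 0 :=
  Nat.eq_zero_of_le_zero <| indepNum_le fun _ hF => absurd (empty_subset _) (hF.2 ∅ h0)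

lemma exists_indepOn_card_eq_indepNum (V : Finset α) (C : Finset (Finset α)) (h0 : ∅ ∉ C) :
    ∃ F, IndepOn V C F ∧ F.card = indepNum V C := by
  obtain ⟨F, hF, hcard⟩ := exists_mem_eq_sup (V.powerset.filter fun F => ∀ e ∈ C, ¬ e ⊆ F)
    ⟨∅, mem_filter.2 ⟨empty_mem_powerset V,
      fun e he hsub => h0 (subset_empty.1 hsub ▸ he)⟩⟩ card
  rw [mem_filter, mem_powerset] at hF
  exact ⟨F, hF, hcard.symm⟩

lemma IndepOn.inter {W : Finset α} {C' : Finset (Finset α)} (hF : IndepOn W C F)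
    (hC' : C' ⊆ C) : IndepOn V C' (F ∩ V) :=
  ⟨inter_subset_right, fun e he hsub => hF.2 e (hC' he) (hsub.trans inter_subset_left)⟩

lemma IndepOn.insert_of_minDeletions (hF : IndepOn V C F) {v : α} (hv : v ∈ V)
    (hmin : ∀ g ∈ minDeletions C, ¬ g ⊆ F) : IndepOn V C (insert v F) := by
  refine ⟨insert_subset hv hF.1, fun e he hsub => ?_⟩
  rw [subset_insert_iff] at hsub
  by_cases hve : v ∈ e
  · obtain ⟨g, hg, hge⟩ := exists_mem_minDeletions_subset
      (mem_biUnion.2 ⟨e, he, mem_image.2 ⟨v, hve, rfl⟩⟩)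
    exact hmin g hg (hge.trans hsub)
  · exact hF.2 e he (erase_eq_of_notMem hve ▸ hsub)

lemma IndepOn.card_lt_indepNum (hF : IndepOn V C F) (hCV : ∀ e ∈ C, e ⊆ V)
    (hC : C.Nonempty) (hmin : ∀ g ∈ minDeletions C, ¬ g ⊆ F) : F.card < indepNum V C := by
  obtain ⟨e, he⟩ := hC
  obtain ⟨v, hve, hvF⟩ := not_subset.1 (hF.2 e he)
  have := (hF.insert_of_minDeletions (hCV e he hve) hmin).card_le_indepNum
  rwa [card_insert_of_notMem hvF] at this

lemma card_inter_insert_le_indepNum {u : α} (hu : u ∉ V) (hCV : ∀ e ∈ C, e ⊆ V)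
    (hC : C.Nonempty) (hF : ∀ e ∈ C, ¬ e ⊆ F)
    (hFu : u ∈ F → ∀ g ∈ minDeletions C, ¬ g ⊆ F) : (F ∩ insert u V).card ≤ indepNum V C := by
  have hFV : IndepOn V C (F ∩ V) :=
    ⟨inter_subset_right, fun e he hsub => hF e he (hsub.trans inter_subset_left)⟩
  by_cases huF : u ∈ F
  · rw [inter_insert_of_mem huF, card_insert_of_notMem fun h => hu (mem_inter.1 h).2]
    exact hFV.card_lt_indepNum hCV hC fun g hg hsub => hFu huF g hg (hsub.trans inter_subset_left)
  · rw [inter_insert_of_notMem huF]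
    exact hFV.card_le_indepNum

end indepNum

/-- The paper's `C''`, with `S u` in the role of `C_u*`. -/
def thirdConstruction (C : Finset (Finset α)) (U : Finset α) (Cu S : α → Finset (Finset α)) :
    Finset (Finset α) :=
  C ∪ U.biUnion Cu ∪ U.biUnion fun u => (S u).image (insert u)

section thirdConstruction

variable {U V : Finset α} {C : Finset (Finset α)} {Vu : α → Finset α}
  {Cu S : α → Finset (Finset α)}

lemma indepNum_thirdConstruction_le (hCuV : ∀ u ∈ U, ∀ e ∈ Cu u, e ⊆ Vu u)
    (hCuNe : ∀ u ∈ U, (Cu u).Nonempty) (hu : ∀ u ∈ U, u ∉ Vu u)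
    (hS : ∀ u ∈ U, S u = minDeletions (Cu u)) :
    indepNum ((U ∪ V) ∪ U.biUnion Vu) (thirdConstruction C U Cu S) ≤
      ∑ u ∈ U, indepNum (Vu u) (Cu u) + indepNum V (C.filter (· ⊆ V)) := by
  refine indepNum_le fun G hG => ?_
  have hcover : G ⊆ (G ∩ V) ∪ U.biUnion fun u => G ∩ insert u (Vu u) := by
    intro x hx
    have := hG.1 hx
    simp only [mem_union, mem_biUnion, mem_inter, mem_insert] at this ⊢
    grind
  have hblock : ∀ u ∈ U, (G ∩ insert u (Vu u)).card ≤ indepNum (Vu u) (Cu u) := by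
    intro u huU
    refine card_inter_insert_le_indepNum (hu u huU) (hCuV u huU) (hCuNe u huU)
      (fun e he => hG.2 e ?_) fun huG g hg hgG => hG.2 (insert u g) ?_ (insert_subset huG hgG)
    all_goals simp only [thirdConstruction, mem_union, mem_biUnion, mem_image]
    · exact Or.inl (Or.inr ⟨u, huU, he⟩)
    · exact Or.inr ⟨u, huU, g, hS u huU ▸ hg, rfl⟩
  have hGV : IndepOn V (C.filter (· ⊆ V)) (G ∩ V) :=
    hG.inter fun e he => mem_union_left _ (mem_union_left _ (mem_filter.1 he).1)
  calc G.card ≤ (G ∩ V).card + ∑ u ∈ U, (G ∩ insert u (Vu u)).card :=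
        (card_le_card hcover).trans <| (card_union_le _ _).trans (by gcongr; exact card_biUnion_le)
    _ ≤ _ := by
        rw [add_comm]
        gcongr with u hu
        exacts [hblock u hu, hGV.card_le_indepNum]

lemma indepOn_union_biUnion_thirdConstruction (hUV : Disjoint U V)
    (hCV : ∀ e ∈ C, e ⊆ U ∪ V) (hCuV : ∀ u ∈ U, ∀ e ∈ Cu u, e ⊆ Vu u)
    (hdisj : ∀ u ∈ U, Disjoint (Vu u) (U ∪ V))
    (hpair : ∀ u ∈ U, ∀ u' ∈ U, u ≠ u' → Disjoint (Vu u) (Vu u'))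
    {IV : Finset α} {I : α → Finset α} (hIV : IndepOn V (C.filter (· ⊆ V)) IV)
    (hI : ∀ u ∈ U, IndepOn (Vu u) (Cu u) (I u)) :
    IndepOn ((U ∪ V) ∪ U.biUnion Vu) (thirdConstruction C U Cu S) (IV ∪ U.biUnion I) := by
  have hmem : ∀ x ∈ IV ∪ U.biUnion I, x ∈ IV ∨ ∃ u ∈ U, x ∈ I u := by
    simp only [mem_union, mem_biUnion, imp_self, implies_true]
  refine ⟨fun x hx => ?_, fun e he hsub => ?_⟩
  · rcases hmem x hx with h | ⟨u, hu, h⟩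
    · exact mem_union_left _ (mem_union_right _ (hIV.1 h))
    · exact mem_union_right _ (mem_biUnion.2 ⟨u, hu, (hI u hu).1 h⟩)
  simp only [thirdConstruction, mem_union, mem_biUnion, mem_image] at he
  rcases he with (heC | ⟨u, hu, he⟩) | ⟨u, hu, g, -, rfl⟩
  · have heIV : e ⊆ IV := fun x hx => (hmem x (hsub hx)).elim id fun ⟨u, hu, h⟩ =>
      absurd (hCV e heC hx) (disjoint_left.1 (hdisj u hu) ((hI u hu).1 h))
    exact hIV.2 e (mem_filter.2 ⟨heC, heIV.trans hIV.1⟩) heIV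
  · have heI : e ⊆ I u := fun x hx => by
      have hxu := hCuV u hu e he hx
      rcases hmem x (hsub hx) with h | ⟨u', hu', h⟩
      · exact absurd (mem_union_right U (hIV.1 h)) (disjoint_left.1 (hdisj u hu) hxu)
      · obtain rfl | hne := eq_or_ne u u'
        · exact h
        · exact absurd ((hI u' hu').1 h) (disjoint_left.1 (hpair u hu u' hu' hne) hxu)
    exact (hI u hu).2 e he heI
  · rcases hmem u (hsub (mem_insert_self u g)) with h | ⟨u', hu', h⟩
    · exact disjoint_left.1 hUV hu (hIV.1 h)
    · exact disjoint_left.1 (hdisj u' hu') ((hI u' hu').1 h) (mem_union_left V hu)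

lemma le_indepNum_thirdConstruction (hUV : Disjoint U V)
    (hC : IsClutterOn (U ∪ V) C) (hCuV : ∀ u ∈ U, ∀ e ∈ Cu u, e ⊆ Vu u)
    (hCuE : ∀ u ∈ U, ∀ e ∈ Cu u, e.Nonempty) (hdisj : ∀ u ∈ U, Disjoint (Vu u) (U ∪ V))
    (hpair : ∀ u ∈ U, ∀ u' ∈ U, u ≠ u' → Disjoint (Vu u) (Vu u')) :
    ∑ u ∈ U, indepNum (Vu u) (Cu u) + indepNum V (C.filter (· ⊆ V)) ≤
      indepNum ((U ∪ V) ∪ U.biUnion Vu) (thirdConstruction C U Cu S) := by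
  by_cases h0 : ∅ ∈ C
  · -- a clutter containing `∅` is `{∅}` on the empty vertex set
    have hU : U = ∅ := subset_empty.1 fun v hv => by
      obtain ⟨e, he, hve⟩ := hC.2.2 v (mem_union_left V hv)
      rwa [← hC.2.1 ∅ h0 e he (empty_subset e)] at hve
    rw [hU, sum_empty, indepNum_eq_zero_of_empty_mem (C := C.filter (· ⊆ V)) V (by simpa using h0)]
    exact Nat.zero_le _
  obtain ⟨IV, hIV, hIVcard⟩ :=
    exists_indepOn_card_eq_indepNum V (C.filter (· ⊆ V)) fun h => h0 (mem_filter.1 h).1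
  choose! I hI hIcard using fun u hu =>
    exists_indepOn_card_eq_indepNum (Vu u) (Cu u) fun h => not_nonempty_empty (hCuE u hu ∅ h)
  have hcard : (IV ∪ U.biUnion I).card = IV.card + ∑ u ∈ U, (I u).card := by
    rw [card_union_of_disjoint, card_biUnion]
    · exact fun u hu u' hu' hne => (hpair u hu u' hu' hne).mono (hI u hu).1 (hI u' hu').1
    · refine disjoint_left.2 fun x hx hx' => ?_
      obtain ⟨u, hu, hxu⟩ := mem_biUnion.1 hx'
      exact disjoint_left.1 (hdisj u hu) ((hI u hu).1 hxu) (mem_union_right U (hIV.1 hx))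
  calc ∑ u ∈ U, indepNum (Vu u) (Cu u) + indepNum V (C.filter (· ⊆ V))
      = (IV ∪ U.biUnion I).card := by
        rw [hcard, ← hIVcard, add_comm, sum_congr rfl fun u hu => (hIcard u hu).symm]
    _ ≤ _ := (indepOn_union_biUnion_thirdConstruction hUV hC.1 hCuV hdisj hpair hIV
        hI).card_le_indepNum

end thirdConstruction

open Finset in
/-- Third construction, dimension formula: for
`C'' = C ∪ ⋃_{u∈U} C_u ∪ ⋃_{u∈U} {{u} ∪ e : e ∈ C_u*}`,
`dim Δ_{C''} = |U| + Σ_{u∈U} dim Δ_{C_u} + dim Δ_{C[V]}` (with `dim Δ = indepNum − 1`). -/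
theorem dim_third_construction (U V : Finset α) (hUV : Disjoint U V)
    (C : Finset (Finset α)) (hC : IsClutterOn (U ∪ V) C)
    (Vu : α → Finset α) (Cu : α → Finset (Finset α))
    (hCu : ∀ u ∈ U, IsClutterOn (Vu u) (Cu u))
    (hCuNe : ∀ u ∈ U, (Cu u).Nonempty)
    (hCuE : ∀ u ∈ U, ∀ e ∈ Cu u, e.Nonempty)
    (hdisj : ∀ u ∈ U, Disjoint (Vu u) (U ∪ V))
    (hpair : ∀ u ∈ U, ∀ u' ∈ U, u ≠ u' → Disjoint (Vu u) (Vu u'))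
    (Cstar : α → Finset (Finset α))
    (hstar : ∀ u ∈ U, Cstar u =
      ((Cu u).biUnion (fun e => e.image (fun x => e.erase x))).filter
        (fun f => ∀ g ∈ (Cu u).biUnion (fun e => e.image (fun x => e.erase x)), ¬ g ⊂ f)) :
    ((indepNum ((U ∪ V) ∪ U.biUnion Vu)
        (C ∪ U.biUnion Cu ∪ U.biUnion (fun u => (Cstar u).image (insert u))) : ℤ) - 1) =
      (U.card : ℤ) + (∑ u ∈ U, ((indepNum (Vu u) (Cu u) : ℤ) - 1)) +
        ((indepNum V (C.filter (fun e => e ⊆ V)) : ℤ) - 1) := by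
  have hu : ∀ u ∈ U, u ∉ Vu u := fun u hu h =>
    disjoint_left.1 (hdisj u hu) h (mem_union_left V hu)
  have key : indepNum ((U ∪ V) ∪ U.biUnion Vu) (thirdConstruction C U Cu Cstar) =
      ∑ u ∈ U, indepNum (Vu u) (Cu u) + indepNum V (C.filter (· ⊆ V)) :=
    le_antisymm (indepNum_thirdConstruction_le (fun u hu => (hCu u hu).1) hCuNe hu hstar)
      (le_indepNum_thirdConstruction hUV hC (fun u hu => (hCu u hu).1) hCuE hdisj hpair)
  rw [thirdConstruction] at key
  rw [key, sum_sub_distrib, sum_const, nsmul_one]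
  push_cast
  ring
end

section
/- Let C be a clutter with vertex set U ∪ V (disjoint), {C_u}_{u∈U} non-empty clutters pairwise disjoint from C and each other, and C' = C ∪ ⋃_{u∈U} {e ∪ {u} : e ∈ C_u}. For each u ∈ U, the link of u in Δ_{C'} satisfies link_{Δ_{C'}}(u) = Δ_{C_u} ⋆ Δ_{(D_u, {C_{u'}}_{u'∈U\{u}})}, where D_u = min(C/u) is the clutter of minimal elements of {e \ {u} : e ∈ C}, and (D_u, {C_{u'}}) denotes the analogous gluing construction applied to D_u. -/
variable {α : Type*} [DecidableEq α]

/-- The independence complex of circuits `C` on vertex set `V`, as a set of finite sets. -/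
def facesOf (V : Finset α) (C : Finset (Finset α)) : Set (Finset α) :=
  {F | IndepOn V C F}

/-- The link of a vertex in a complex. -/
def linkCx (Δ : Set (Finset α)) (v : α) : Set (Finset α) :=
  {G | G ∈ Δ ∧ v ∉ G ∧ insert v G ∈ Δ}

/-- The join of two complexes. -/
def joinCx (A B : Set (Finset α)) : Set (Finset α) :=
  {F | ∃ a ∈ A, ∃ b ∈ B, F = a ∪ b}

/-- The gluing `(C, {C_u}_{u∈U}) = C ∪ ⋃_{u∈U} {e ∪ {u} : e ∈ C_u}`. -/
def glue (C : Finset (Finset α)) (U : Finset α) (Cu : α → Finset (Finset α)) :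
    Finset (Finset α) :=
  C ∪ U.biUnion (fun u => (Cu u).image (insert u))

open Finset in
/-- Every member of a finite family of finsets contains a member that is minimal
in the family. -/
lemma exists_min_subset' (S : Finset (Finset α)) (g : Finset α) :
    g ∈ S → ∃ f ∈ S.filter (fun f => ∀ g' ∈ S, ¬ g' ⊂ f), f ⊆ g := by
  induction g using Finset.strongInduction with
  | _ g ih =>
    intro hg
    by_cases h : ∀ g' ∈ S, ¬ g' ⊂ g
    · exact ⟨g, Finset.mem_filter.2 ⟨hg, h⟩, subset_rfl⟩
    · push_neg at h
      obtain ⟨g', hg', hss⟩ := h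
      obtain ⟨f, hf, hfs⟩ := ih g' hss hg'
      exact ⟨f, hf, hfs.trans hss.subset⟩

open Finset in
/-- Second construction, links: for each `u ∈ U`,
`link_{Δ_{C'}}(u) = Δ_{C_u} ⋆ Δ_{(D_u, {C_{u'}}_{u'∈U\{u}})}`, where `D_u = min(C/u)`. -/
theorem link_second_construction (U V : Finset α) (hUV : Disjoint U V)
    (C : Finset (Finset α)) (hC : IsClutterOn (U ∪ V) C)
    (Vu : α → Finset α) (Cu : α → Finset (Finset α))
    (hCu : ∀ u ∈ U, IsClutterOn (Vu u) (Cu u))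
    (hCuNe : ∀ u ∈ U, (Cu u).Nonempty)
    (hCuE : ∀ u ∈ U, ∀ e ∈ Cu u, e.Nonempty)
    (hdisj : ∀ u ∈ U, Disjoint (Vu u) (U ∪ V))
    (hpair : ∀ u ∈ U, ∀ u' ∈ U, u ≠ u' → Disjoint (Vu u) (Vu u'))
    (u : α) (hu : u ∈ U)
    (Du : Finset (Finset α))
    (hDu : Du = (C.image (fun e => e.erase u)).filter
      (fun f => ∀ g ∈ C.image (fun e => e.erase u), ¬ g ⊂ f)) :
    linkCx (facesOf ((U ∪ V) ∪ U.biUnion Vu) (glue C U Cu)) u =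
      joinCx (facesOf (Vu u) (Cu u))
        (facesOf (((U ∪ V).erase u) ∪ (U.erase u).biUnion Vu)
          (glue Du (U.erase u) Cu)) := by
  -- Basic disjointness facts
  have huUV : u ∈ U ∪ V := Finset.mem_union_left _ hu
  have huVu : ∀ u' ∈ U, ∀ w ∈ U ∪ V, w ∉ Vu u' := fun u' hu' w hw hwV =>
    Finset.disjoint_left.mp (hdisj u' hu') hwV hw
  have hW'Vu : ∀ x ∈ ((U ∪ V).erase u) ∪ (U.erase u).biUnion Vu, x ∉ Vu u := by
    intro x hx hxV
    rcases Finset.mem_union.mp hx with h | h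
    · exact huVu u hu x (Finset.mem_of_mem_erase h) hxV
    · obtain ⟨u', hu', hx'⟩ := Finset.mem_biUnion.mp h
      obtain ⟨hne, hu'U⟩ := Finset.mem_erase.mp hu'
      exact Finset.disjoint_left.mp (hpair u hu u' hu'U (Ne.symm hne)) hxV hx'
  have huW' : u ∉ ((U ∪ V).erase u) ∪ (U.erase u).biUnion Vu := by
    intro h
    rcases Finset.mem_union.mp h with h | h
    · exact (Finset.mem_erase.mp h).1 rfl
    · obtain ⟨u', hu', hx'⟩ := Finset.mem_biUnion.mp h
      exact huVu u' (Finset.mem_of_mem_erase hu') u huUV hx'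
  have hW'W : ((U ∪ V).erase u) ∪ (U.erase u).biUnion Vu ⊆ (U ∪ V) ∪ U.biUnion Vu := by
    intro x hx
    rcases Finset.mem_union.mp hx with h | h
    · exact Finset.mem_union_left _ (Finset.mem_of_mem_erase h)
    · obtain ⟨u', hu', hx'⟩ := Finset.mem_biUnion.mp h
      exact Finset.mem_union_right _
        (Finset.mem_biUnion.mpr ⟨u', Finset.mem_of_mem_erase hu', hx'⟩)
  ext G
  simp only [linkCx, joinCx, facesOf, Set.mem_setOf_eq, IndepOn]
  constructor
  · rintro ⟨⟨hGW, hGind⟩, huG, hiW, hiind⟩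
    refine ⟨G ∩ Vu u, ⟨Finset.inter_subset_right, ?_⟩,
      G \ Vu u, ⟨?_, ?_⟩, ?_⟩
    · -- `G ∩ Vu u` is independent w.r.t. `Cu u`
      intro e he hsub
      refine hiind (insert u e) ?_ ?_
      · exact Finset.mem_union_right _
          (Finset.mem_biUnion.mpr ⟨u, hu, Finset.mem_image.mpr ⟨e, he, rfl⟩⟩)
      · exact Finset.insert_subset_insert u (hsub.trans Finset.inter_subset_left)
    · -- `G \ Vu u` lands in the smaller vertex set
      intro x hx
      obtain ⟨hxG, hxV⟩ := Finset.mem_sdiff.mp hx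
      rcases Finset.mem_union.mp (hGW hxG) with h | h
      · refine Finset.mem_union_left _ (Finset.mem_erase.mpr ⟨?_, h⟩)
        rintro rfl; exact huG hxG
      · obtain ⟨u', hu', hx'⟩ := Finset.mem_biUnion.mp h
        have hne : u' ≠ u := by rintro rfl; exact hxV hx'
        exact Finset.mem_union_right _
          (Finset.mem_biUnion.mpr ⟨u', Finset.mem_erase.mpr ⟨hne, hu'⟩, hx'⟩)
    · -- `G \ Vu u` is independent w.r.t. the glued clutter on `Du`
      intro e he hsub
      have hsubG : e ⊆ G := hsub.trans Finset.sdiff_subset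
      rcases Finset.mem_union.mp he with h | h
      · -- e ∈ Du
        subst hDu
        obtain ⟨hS, _⟩ := Finset.mem_filter.mp h
        obtain ⟨e₀, he₀, rfl⟩ := Finset.mem_image.mp hS
        refine hiind e₀ (Finset.mem_union_left _ he₀) ?_
        intro x hx
        by_cases hxu : x = u
        · exact hxu ▸ Finset.mem_insert_self u G
        · exact Finset.mem_insert_of_mem (hsubG (Finset.mem_erase.mpr ⟨hxu, hx⟩))
      · obtain ⟨u', hu', hfi⟩ := Finset.mem_biUnion.mp h
        obtain ⟨f, hfC, rfl⟩ := Finset.mem_image.mp hfi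
        refine hiind (insert u' f) ?_ (hsubG.trans (Finset.subset_insert u G))
        exact Finset.mem_union_right _ (Finset.mem_biUnion.mpr
          ⟨u', Finset.mem_of_mem_erase hu', Finset.mem_image.mpr ⟨f, hfC, rfl⟩⟩)
    · -- `G = (G ∩ Vu u) ∪ (G \ Vu u)`
      ext x
      simp only [Finset.mem_union, Finset.mem_inter, Finset.mem_sdiff]
      tauto
  · rintro ⟨a, ⟨haV, haind⟩, b, ⟨hbW, hbind⟩, rfl⟩
    have hbVu : ∀ x ∈ b, x ∉ Vu u := fun x hx => hW'Vu x (hbW hx)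
    have huab : u ∉ a ∪ b := by
      intro h
      rcases Finset.mem_union.mp h with h | h
      · exact huVu u hu u huUV (haV h)
      · exact huW' (hbW h)
    have habW : a ∪ b ⊆ (U ∪ V) ∪ U.biUnion Vu := by
      refine Finset.union_subset (haV.trans ?_) (hbW.trans hW'W)
      exact (Finset.subset_biUnion_of_mem Vu hu).trans (Finset.subset_union_right)
    have hiind : ∀ e ∈ glue C U Cu, ¬ e ⊆ insert u (a ∪ b) := by
      intro e he hsub
      rcases Finset.mem_union.mp he with h | h
      · -- e ∈ C : reduce to a minimal element of `min(C/u)` inside b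
        have heb : e.erase u ⊆ b := by
          intro x hx
          obtain ⟨hxu, hxe⟩ := Finset.mem_erase.mp hx
          have hxUV : x ∈ U ∪ V := hC.1 e h hxe
          rcases Finset.mem_insert.mp (hsub hxe) with h' | h'
          · exact absurd h' hxu
          · rcases Finset.mem_union.mp h' with h'' | h''
            · exact absurd (haV h'') (huVu u hu x hxUV)
            · exact h''
        obtain ⟨f, hfDu, hfsub⟩ := exists_min_subset'
          (C.image (fun e => e.erase u)) (e.erase u)
          (Finset.mem_image.mpr ⟨e, h, rfl⟩)
        exact hbind f (Finset.mem_union_left _ (hDu ▸ hfDu)) (hfsub.trans heb)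
      · obtain ⟨u', hu', hfi⟩ := Finset.mem_biUnion.mp h
        obtain ⟨f, hfC, rfl⟩ := Finset.mem_image.mp hfi
        have hfVu : f ⊆ Vu u' := (hCu u' hu').1 f hfC
        by_cases hne : u' = u
        · -- circuit of Cu u inside a
          refine haind f (hne ▸ hfC) ?_
          intro x hx
          have hxV : x ∈ Vu u := hne ▸ hfVu hx
          rcases Finset.mem_insert.mp (hsub (Finset.mem_insert_of_mem hx)) with h' | h'
          · exact absurd (h' ▸ hxV) (huVu u hu u huUV)
          · rcases Finset.mem_union.mp h' with h'' | h''
            · exact h''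
            · exact absurd hxV (hbVu x h'')
        · -- circuit `insert u' f` with u' ≠ u inside b
          have hesub : insert u' f ⊆ b := by
            intro x hx
            have hxu : x ≠ u := by
              intro hxeq
              rcases Finset.mem_insert.mp hx with h1 | hxf
              · exact hne (h1.symm.trans hxeq)
              · exact huVu u' hu' u huUV (hxeq ▸ hfVu hxf)
            rcases Finset.mem_insert.mp (hsub hx) with h' | h'
            · exact absurd h' hxu
            · rcases Finset.mem_union.mp h' with h'' | h''
              · exfalso
                rcases Finset.mem_insert.mp hx with h1 | hxf
                · exact huVu u hu u' (Finset.mem_union_left _ hu') (h1 ▸ haV h'')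
                · exact Finset.disjoint_left.mp
                    (hpair u hu u' hu' (Ne.symm hne)) (haV h'') (hfVu hxf)
              · exact h''
          refine hbind (insert u' f) ?_ hesub
          exact Finset.mem_union_right _ (Finset.mem_biUnion.mpr
            ⟨u', Finset.mem_erase.mpr ⟨hne, hu'⟩, Finset.mem_image.mpr ⟨f, hfC, rfl⟩⟩)
    refine ⟨⟨habW, fun e he hsub => hiind e he (hsub.trans (Finset.subset_insert _ _))⟩,
      huab, Finset.insert_subset (Finset.mem_union_left _ huUV) habW, hiind⟩
end

section
/- Let C be a clutter with vertex set U ∪ V (disjoint), {C_u}_{u∈U} non-empty clutters pairwise disjoint from C and each other, and C' = C ∪ ⋃_{u∈U}{e ∪ {u} : e ∈ C_u}. Then every u ∈ U is a shedding vertex of Δ_{C'}: each facet of Δ_{C'} \ u is a facet of Δ_{C'}. Moreover Δ_{C'} \ u = ⟨V(C_u)⟩ ⋆ Δ_{(C \ u, {C_{u'}}_{u'∈U\{u}})}, where ⟨V(C_u)⟩ is the full simplex on V(C_u) and C \ u denotes strong deletion. -/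
variable {α : Type*} [DecidableEq α]

/-- A facet (maximal element) of a complex given as a set of finite sets. -/
def IsFacetOf (Δ : Set (Finset α)) (F : Finset α) : Prop :=
  F ∈ Δ ∧ ∀ G ∈ Δ, F ⊆ G → F = G

open Finset in
/-- Second construction, shedding: each `u ∈ U` is a shedding vertex of `Δ_{C'}`, and
`Δ_{C'} \ u = ⟨V(C_u)⟩ ⋆ Δ_{(C \ u, {C_{u'}}_{u'∈U\{u}})}`. -/
theorem shedding_second_construction (U V : Finset α) (hUV : Disjoint U V)
    (C : Finset (Finset α)) (hC : IsClutterOn (U ∪ V) C)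
    (Vu : α → Finset α) (Cu : α → Finset (Finset α))
    (hCu : ∀ u ∈ U, IsClutterOn (Vu u) (Cu u))
    (hCuNe : ∀ u ∈ U, (Cu u).Nonempty)
    (hCuE : ∀ u ∈ U, ∀ e ∈ Cu u, e.Nonempty)
    (hdisj : ∀ u ∈ U, Disjoint (Vu u) (U ∪ V))
    (hpair : ∀ u ∈ U, ∀ u' ∈ U, u ≠ u' → Disjoint (Vu u) (Vu u'))
    (u : α) (hu : u ∈ U) :
    (∀ F, IsFacetOf {G ∈ facesOf ((U ∪ V) ∪ U.biUnion Vu) (glue C U Cu) | u ∉ G} F →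
        IsFacetOf (facesOf ((U ∪ V) ∪ U.biUnion Vu) (glue C U Cu)) F) ∧
    {G ∈ facesOf ((U ∪ V) ∪ U.biUnion Vu) (glue C U Cu) | u ∉ G} =
      joinCx {F : Finset α | F ⊆ Vu u}
        (facesOf (((U ∪ V).erase u) ∪ (U.erase u).biUnion Vu)
          (glue (C.filter (fun e => u ∉ e)) (U.erase u) Cu)) := by
  classical
  have hVuU : ∀ u' ∈ U, ∀ x ∈ Vu u', x ∉ U ∪ V := fun u' h x hx =>
    Finset.disjoint_left.mp (hdisj u' h) hx
  have hu_nVu : ∀ u' ∈ U, u ∉ Vu u' := fun u' h hx =>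
    hVuU u' h u hx (Finset.mem_union_left _ hu)
  have hglue : ∀ e, e ∈ glue C U Cu ↔
      e ∈ C ∨ ∃ u' ∈ U, ∃ e' ∈ Cu u', e = insert u' e' := by
    intro e
    simp [glue, eq_comm]
  have hu_nW' : u ∉ ((U ∪ V).erase u) ∪ (U.erase u).biUnion Vu := by
    simp only [Finset.mem_union, Finset.mem_erase, Finset.mem_biUnion, not_or]
    refine ⟨by simp, ?_⟩
    rintro ⟨u', hu', hin⟩
    exact hu_nVu u' hu'.2 hin
  have hsub_glue : glue (C.filter (fun e => u ∉ e)) (U.erase u) Cu ⊆ glue C U Cu :=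
    Finset.union_subset_union (Finset.filter_subset _ _)
      (Finset.biUnion_subset_biUnion_of_subset_left _ (Finset.erase_subset _ _))
  have hW'W : ((U ∪ V).erase u) ∪ (U.erase u).biUnion Vu ⊆ (U ∪ V) ∪ U.biUnion Vu := by
    apply Finset.union_subset_union (Finset.erase_subset _ _)
    exact Finset.biUnion_subset_biUnion_of_subset_left _ (Finset.erase_subset _ _)
  constructor
  · -- shedding
    rintro F ⟨⟨hFface, hFu⟩, hmax⟩
    obtain ⟨hFW, hFC⟩ := hFface
    -- Vu u ⊆ F
    have hVuF : Vu u ⊆ F := by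
      intro v hv
      have hvnUV : v ∉ U ∪ V := hVuU u hu v hv
      have hne : u ≠ v := fun h => hu_nVu u hu (h ▸ hv)
      have hface : insert v F ∈ facesOf ((U ∪ V) ∪ U.biUnion Vu) (glue C U Cu) := by
        refine ⟨Finset.insert_subset (Finset.mem_union_right _
          (Finset.mem_biUnion.mpr ⟨u, hu, hv⟩)) hFW, ?_⟩
        intro e he hsub
        rcases (hglue e).mp he with heC | ⟨u', hu', e', he', rfl⟩
        · refine hFC e he (fun x hx => ?_)
          rcases Finset.mem_insert.mp (hsub hx) with rfl | h
          · exact absurd (hC.1 e heC hx) hvnUV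
          · exact h
        · rcases eq_or_ne u' u with heq | hne'
          · have : u ∈ insert v F := hsub (heq ▸ Finset.mem_insert_self u' e')
            rcases Finset.mem_insert.mp this with h | h
            · exact hne h
            · exact hFu h
          · refine hFC _ ((hglue _).mpr (Or.inr ⟨u', hu', e', he', rfl⟩))
              (fun x hx => ?_)
            rcases Finset.mem_insert.mp (hsub hx) with hxv | h
            · rcases Finset.mem_insert.mp hx with hxu' | hxe
              · refine absurd (Finset.mem_union_left V ?_) (hVuU u hu v hv)
                rw [← hxv, hxu']; exact hu'
              · exact absurd (hxv.symm ▸ hv : x ∈ Vu u)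
                  (Finset.disjoint_left.mp (hpair u' hu' u hu hne')
                    ((hCu u' hu').1 e' he' hxe))
            · exact h
      have := hmax (insert v F) ⟨hface, by
        simp only [Finset.mem_insert, not_or]
        exact ⟨hne, hFu⟩⟩ (Finset.subset_insert _ _)
      rw [this]; exact Finset.mem_insert_self _ _
    refine ⟨⟨hFW, hFC⟩, ?_⟩
    intro G hG hFG
    by_cases huG : u ∈ G
    · obtain ⟨e, he⟩ := hCuNe u hu
      exfalso
      refine hG.2 (insert u e) ((hglue _).mpr (Or.inr ⟨u, hu, e, he, rfl⟩)) ?_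
      exact Finset.insert_subset huG (fun x hx => hFG (hVuF ((hCu u hu).1 e he hx)))
    · exact hmax G ⟨hG, huG⟩ hFG
  · -- the join decomposition
    ext G
    simp only [Set.mem_setOf_eq, joinCx, facesOf, IndepOn]
    constructor
    · rintro ⟨⟨hGW, hGC⟩, hGu⟩
      refine ⟨G ∩ Vu u, Finset.inter_subset_right, G \ Vu u, ⟨?_, ?_⟩, ?_⟩
      · intro x hx
        obtain ⟨hxG, hxV⟩ := Finset.mem_sdiff.mp hx
        rcases Finset.mem_union.mp (hGW hxG) with h1 | h1
        · exact Finset.mem_union_left _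
            (Finset.mem_erase.mpr ⟨fun h => hGu (h ▸ hxG), h1⟩)
        · obtain ⟨u', hu', hx'⟩ := Finset.mem_biUnion.mp h1
          refine Finset.mem_union_right _ (Finset.mem_biUnion.mpr
            ⟨u', Finset.mem_erase.mpr ⟨?_, hu'⟩, hx'⟩)
          rintro rfl; exact hxV hx'
      · intro e he hsub
        exact hGC e (hsub_glue he) (hsub.trans (Finset.sdiff_subset))
      · ext x
        simp only [Finset.mem_union, Finset.mem_inter, Finset.mem_sdiff]
        tauto
    · rintro ⟨a, ha, b, ⟨hbW, hbC⟩, rfl⟩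
      have huab : u ∉ a ∪ b := by
        simp only [Finset.mem_union, not_or]
        exact ⟨fun h => hu_nVu u hu (ha h), fun h => hu_nW' (hbW h)⟩
      refine ⟨⟨?_, ?_⟩, huab⟩
      · refine Finset.union_subset (fun x hx => Finset.mem_union_right _
          (Finset.mem_biUnion.mpr ⟨u, hu, ha hx⟩)) (hbW.trans hW'W)
      · intro e he hsub
        rcases (hglue e).mp he with heC | ⟨u', hu', e', he', rfl⟩
        · by_cases hue : u ∈ e
          · exact huab (hsub hue)
          · refine hbC e (Finset.mem_union_left _
              (Finset.mem_filter.mpr ⟨heC, hue⟩)) (fun x hx => ?_)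
            rcases Finset.mem_union.mp (hsub hx) with h | h
            · exact absurd (ha h) (fun hv => hVuU u hu x hv (hC.1 e heC hx))
            · exact h
        · rcases eq_or_ne u' u with heq | hne'
          · exact huab (hsub (heq ▸ Finset.mem_insert_self u' e'))
          · refine hbC (insert u' e') ?_ (fun x hx => ?_)
            · refine Finset.mem_union_right _ (Finset.mem_biUnion.mpr
                ⟨u', Finset.mem_erase.mpr ⟨hne', hu'⟩, ?_⟩)
              exact Finset.mem_image_of_mem _ he'
            · rcases Finset.mem_union.mp (hsub hx) with h | h
              · exfalso
                rcases Finset.mem_insert.mp hx with hxu' | hxe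
                · exact hVuU u hu x (ha h) (Finset.mem_union_left V (hxu' ▸ hu'))
                · exact Finset.disjoint_left.mp (hpair u' hu' u hu hne')
                    ((hCu u' hu').1 e' he' hxe) (ha h)
              · exact h
end
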